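/- (Positivity of the low order update, Theorem 5.1.) Let J be a finite index set, let u ∈ A, let ū_j ∈ A for each j ∈ J, let λ_j ≥ 0 for each j ∈ J, let m > 0, set λ := Σ_{j∈J} λ_j, and let τ ≥ 0 satisfy 2τλ ≤ m. Then the forward-Euler low order update u′ := (1 − 2τλ/m)·u + (2τ/m)·Σ_{j∈J} λ_j·ū_j lies in the admissible set A. -/

import Mathlib

/-- States of the 2D compressible flow equations: `u = (ρ, m, E)`. -/
abbrev State : Type := ℝ × EuclideanSpace ℝ (Fin 2) × ℝ

/-- The internal energy `ρe(u) = E - ‖m‖²/(2ρ)`. -/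
noncomputable def internalEnergy (u : State) : ℝ :=
  u.2.2 - ‖u.2.1‖ ^ 2 / (2 * u.1)

/-- The admissible set `A = {u | ρ > 0 ∧ ρe(u) > 0}`. -/
noncomputable def admissibleSet : Set State :=
  {u | 0 < u.1 ∧ 0 < internalEnergy u}

/-!
The admissible set is the strict superlevel set `{ρe > 0}` of the internal energy on the
half-space `{ρ > 0}`, and the internal energy is concave there: `E` is linear and
`(ρ, m) ↦ ‖m‖²/ρ` is the perspective of `‖m‖²`, hence jointly convex (Sedrakyan's inequality
after the triangle inequality). So `A` is convex. Under the CFL condition the low order update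
has nonnegative weights `1 - 2τλ/m` and `2τλ_j/m` summing to one, so it is a convex
combination of `u` and the `ū_j`.
-/

open Finset

theorem sq_add_div_add_le {R : Type*} [Field R] [LinearOrder R] [IsStrictOrderedRing R]
    {x y a b : R} (ha : 0 < a) (hb : 0 < b) :
    (x + y) ^ 2 / (a + b) ≤ x ^ 2 / a + y ^ 2 / b := by
  simpa [Fin.sum_univ_two] using
    sq_sum_div_le_sum_sq_div univ ![x, y] (g := ![a, b]) (by simp [Fin.forall_fin_two, ha, hb])

theorem norm_smul_add_smul_sq_div_le {E : Type*} [SeminormedAddCommGroup E] [NormedSpace ℝ E]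
    {a b ρ σ : ℝ} (x y : E) (ha : 0 < a) (hb : 0 < b) (hρ : 0 < ρ) (hσ : 0 < σ) :
    ‖a • x + b • y‖ ^ 2 / (a * ρ + b * σ) ≤ a * (‖x‖ ^ 2 / ρ) + b * (‖y‖ ^ 2 / σ) := by
  have htri : ‖a • x + b • y‖ ≤ a * ‖x‖ + b * ‖y‖ := by
    simpa [norm_smul, abs_of_pos ha, abs_of_pos hb] using norm_add_le (a • x) (b • y)
  calc ‖a • x + b • y‖ ^ 2 / (a * ρ + b * σ)
      ≤ (a * ‖x‖ + b * ‖y‖) ^ 2 / (a * ρ + b * σ) := by gcongr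
    _ ≤ (a * ‖x‖) ^ 2 / (a * ρ) + (b * ‖y‖) ^ 2 / (b * σ) :=
        sq_add_div_add_le (by positivity) (by positivity)
    _ = a * (‖x‖ ^ 2 / ρ) + b * (‖y‖ ^ 2 / σ) := by field_simp

theorem convexOn_norm_sq_div {E : Type*} [SeminormedAddCommGroup E] [NormedSpace ℝ E] :
    ConvexOn ℝ (Set.Ioi 0 ×ˢ Set.univ) fun p : ℝ × E ↦ ‖p.2‖ ^ 2 / p.1 := by
  refine convexOn_iff_forall_pos.2 ⟨(convex_Ioi 0).prod convex_univ, ?_⟩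
  rintro ⟨ρ, x⟩ ⟨hρ, -⟩ ⟨σ, y⟩ ⟨hσ, -⟩ a b ha hb -
  exact norm_smul_add_smul_sq_div_le x y ha hb hρ hσ

theorem Convex.one_sub_sum_smul_add_sum_smul_mem {𝕜 E ι : Type*} [Field 𝕜] [LinearOrder 𝕜]
    [IsStrictOrderedRing 𝕜] [AddCommGroup E] [Module 𝕜 E] {s : Set E} (hs : Convex 𝕜 s)
    {t : Finset ι} {x : E} (hx : x ∈ s) {y : ι → E} (hy : ∀ i ∈ t, y i ∈ s) {c : ι → 𝕜}
    (hc : ∀ i ∈ t, 0 ≤ c i) (hc₁ : ∑ i ∈ t, c i ≤ 1) :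
    (1 - ∑ i ∈ t, c i) • x + ∑ i ∈ t, c i • y i ∈ s := by
  have hmem := hs.sum_mem (t := t.insertNone) (w := fun o ↦ o.elim (1 - ∑ i ∈ t, c i) c)
    (z := fun o ↦ o.elim x y) ?_ ?_ ?_
  · simpa only [sum_insertNone, Option.elim] using hmem
  · rintro (_ | i) hi
    · exact sub_nonneg.2 hc₁
    · exact hc i (mem_insertNone.1 hi i rfl)
  · simp only [sum_insertNone, Option.elim, sub_add_cancel]
  · rintro (_ | i) hi
    · exact hx
    · exact hy i (mem_insertNone.1 hi i rfl)

theorem concaveOn_internalEnergy : ConcaveOn ℝ {u : State | 0 < u.1} internalEnergy := by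
  let density_momentum : State →ₗ[ℝ] ℝ × EuclideanSpace ℝ (Fin 2) :=
    (LinearMap.fst ℝ ℝ _).prod ((LinearMap.fst ℝ _ ℝ).comp (LinearMap.snd ℝ ℝ _))
  have hkinetic := convexOn_norm_sq_div.comp_linearMap density_momentum
  have hdomain : density_momentum ⁻¹' (Set.Ioi 0 ×ˢ Set.univ) = {u : State | 0 < u.1} := by
    ext u; simp [density_momentum]
  rw [hdomain] at hkinetic
  have hE : ConcaveOn ℝ {u : State | 0 < u.1} fun u ↦ u.2.2 :=
    ((LinearMap.snd ℝ _ ℝ).comp (LinearMap.snd ℝ ℝ _)).concaveOn hkinetic.1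
  refine (hE.sub (hkinetic.smul (by norm_num : (0 : ℝ) ≤ 1 / 2))).congr fun u _ ↦ ?_
  show u.2.2 - 1 / 2 * (‖u.2.1‖ ^ 2 / u.1) = _
  rw [internalEnergy]
  ring

theorem convex_admissibleSet : Convex ℝ admissibleSet :=
  concaveOn_internalEnergy.convex_gt 0

/-- Positivity of the low order forward-Euler update (Theorem 5.1): under the
CFL condition `2τλ ≤ m`, the update
`u' = (1 - 2τλ/m) u + (2τ/m) Σ_j λ_j ū_j` is admissible whenever `u` and all
intermediate states `ū_j` are admissible. -/
theorem low_order_update_admissible {J : Type*} [Fintype J]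
    (u : State) (hu : u ∈ admissibleSet)
    (ubar : J → State) (hubar : ∀ j, ubar j ∈ admissibleSet)
    (lam : J → ℝ) (hlam : ∀ j, 0 ≤ lam j)
    (m : ℝ) (hm : 0 < m) (τ : ℝ) (hτ : 0 ≤ τ)
    (hCFL : 2 * τ * (∑ j, lam j) ≤ m) :
    (1 - 2 * τ * (∑ j, lam j) / m) • u + (2 * τ / m) • ∑ j, lam j • ubar j
      ∈ admissibleSet := by
  have hweights : 2 * τ * (∑ j, lam j) / m = ∑ j, 2 * τ / m * lam j := by
    rw [← mul_sum]; ring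
  have hupdate : (2 * τ / m) • ∑ j, lam j • ubar j = ∑ j, (2 * τ / m * lam j) • ubar j := by
    simp only [smul_sum, smul_smul]
  rw [hweights, hupdate]
  exact convex_admissibleSet.one_sub_sum_smul_add_sum_smul_mem hu (fun j _ ↦ hubar j)
    (fun j _ ↦ mul_nonneg (by positivity) (hlam j)) (by rwa [← hweights, div_le_one hm])
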